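/- arXiv:1802.05363 — 8 statements merged into one kernel-verified Lean document; each statement's English description precedes it below -/
import Mathlib

section
/- Let K₀ ∈ ℝ and F₀ ≥ 0. Suppose λ, f : [0,∞) → ℝ are differentiable, positive, satisfy λ(0) = f(0) = 1, and for all t ≥ 0 satisfy λ'(t) = -(2/3)·K₀ + (2/3)·F₀·f(t)²·λ(t)⁻¹ and f'(t) = (2/3)·K₀·f(t)·λ(t)⁻¹ - (2/3)·F₀·f(t)³·λ(t)⁻². Then f(t)·λ(t) = 1 for all t ≥ 0. -/
/-- For the normalized S¹-triple Ricci flow system with parameters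
`(K₀, F₀)`, `F₀ ≥ 0`, any positive differentiable solution `(λ, f)` on `[0,∞)` with
`λ(0) = f(0) = 1` satisfies `f(t)·λ(t) = 1` for all `t ≥ 0`. -/
theorem stmt_0 (K₀ F₀ : ℝ) (hF₀ : 0 ≤ F₀) (lam f : ℝ → ℝ)
    (hlpos : ∀ t ∈ Set.Ici (0:ℝ), 0 < lam t)
    (hfpos : ∀ t ∈ Set.Ici (0:ℝ), 0 < f t)
    (hl0 : lam 0 = 1) (hf0 : f 0 = 1)
    (hlam : ∀ t ∈ Set.Ici (0:ℝ),
      HasDerivWithinAt lam (-(2/3) * K₀ + (2/3) * F₀ * (f t)^2 * (lam t)⁻¹) (Set.Ici 0) t)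
    (hf : ∀ t ∈ Set.Ici (0:ℝ),
      HasDerivWithinAt f
        ((2/3) * K₀ * f t * (lam t)⁻¹ - (2/3) * F₀ * (f t)^3 * ((lam t)^2)⁻¹) (Set.Ici 0) t) :
    ∀ t ∈ Set.Ici (0:ℝ), f t * lam t = 1 := by
  have hg : ∀ t ∈ Set.Ici (0:ℝ),
      HasDerivWithinAt (fun s => f s * lam s) 0 (Set.Ici 0) t := by
    intro t ht
    have h := (hf t ht).mul (hlam t ht)
    have hl := (hlpos t ht).ne'
    have heq : ((2/3) * K₀ * f t * (lam t)⁻¹ - (2/3) * F₀ * (f t)^3 * ((lam t)^2)⁻¹) * lam t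
        + f t * (-(2/3) * K₀ + (2/3) * F₀ * (f t)^2 * (lam t)⁻¹) = 0 := by
      field_simp
      ring
    rwa [heq] at h
  intro t ht
  have hcont : ContinuousOn (fun s => f s * lam s) (Set.Icc 0 t) := fun x hx =>
    ((hg x (Set.Icc_subset_Ici_self hx)).continuousWithinAt).mono
      (fun y hy => hy.1 : Set.Icc (0:ℝ) t ⊆ Set.Ici 0)
  have := constant_of_has_deriv_right_zero hcont (fun x hx =>
    (hg x (Set.mem_Ici.mpr hx.1)).mono (Set.Ici_subset_Ici.mpr hx.1)) t
    (Set.right_mem_Icc.mpr ht)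
  simpa [hf0, hl0] using this
end

section
/- Let K₀ > 0 and set F₀ = K₀. Define λ(t) := 1 - K₀·t and f(t) := √(1 - K₀·t) for t ∈ [0, 1/K₀). Then λ and f are positive and differentiable on [0, 1/K₀), λ(0) = f(0) = 1, and for all t ∈ [0, 1/K₀) they satisfy the unnormalized S¹-triple Ricci flow system: λ'(t) = -2·K₀ + F₀·f(t)²·λ(t)⁻¹ and f'(t) = -(1/2)·F₀·f(t)³·λ(t)⁻². Moreover λ(t) → 0 as t → (1/K₀)⁻. -/
/-! The explicit solution has `f² = λ`, which collapses the system: the `λ`-equation becomes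
`λ' = -2K₀ + F₀ = -K₀`, and the `f`-equation becomes `f' = -F₀ / (2f)`, which is the derivative
of `√(1 - K₀t)`. Both functions are then positive exactly while `1 - K₀t > 0`, i.e. for `t < 1/K₀`. -/

open Filter Topology

section RicciFlowAlgebra

variable {𝕜 : Type*} [Field 𝕜] {K l f : 𝕜}

theorem lambda_rhs_eq_of_sq_eq (hl : l ≠ 0) (hfl : f ^ 2 = l) :
    -2 * K + K * f ^ 2 * l⁻¹ = -K := by
  rw [hfl]
  field_simp
  ring

theorem fiber_rhs_eq_of_sq_eq (hf : f ≠ 0) (hfl : f ^ 2 = l) :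
    -(1 / 2) * K * f ^ 3 * (l ^ 2)⁻¹ = -K / (2 * f) := by
  subst hfl
  field_simp

end RicciFlowAlgebra

theorem one_sub_mul_pos_of_lt_one_div {c t : ℝ} (hc : 0 < c) (ht : t < 1 / c) :
    0 < 1 - c * t := by
  rw [lt_div_iff₀ hc] at ht
  linarith

theorem hasDerivAt_one_sub_mul (c t : ℝ) : HasDerivAt (fun t => 1 - c * t) (-c) t := by
  simpa using ((hasDerivAt_id t).const_mul c).const_sub 1

theorem tendsto_one_sub_mul_one_div {c : ℝ} (hc : c ≠ 0) :
    Tendsto (fun t => 1 - c * t) (𝓝 (1 / c)) (𝓝 0) := by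
  have hcont : Continuous fun t : ℝ => 1 - c * t := by fun_prop
  simpa [mul_inv_cancel₀ hc] using hcont.tendsto (1 / c)

/-- For `K₀ > 0` and `F₀ = K₀`, the pair `λ(t) = 1 - K₀t`,
`f(t) = √(1 - K₀t)` solves the unnormalized S¹-triple Ricci flow system on `[0, 1/K₀)`,
and `λ(t) → 0` as `t → (1/K₀)⁻`. -/
theorem stmt_2 (K₀ F₀ : ℝ) (hK₀ : 0 < K₀) (hF₀ : F₀ = K₀)
    (lam f : ℝ → ℝ) (hlam : lam = fun t => 1 - K₀ * t)
    (hf : f = fun t => Real.sqrt (1 - K₀ * t)) :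
    (∀ t ∈ Set.Ico (0:ℝ) (1 / K₀), 0 < lam t ∧ 0 < f t) ∧
    (∀ t ∈ Set.Ico (0:ℝ) (1 / K₀),
      DifferentiableWithinAt ℝ lam (Set.Ico 0 (1 / K₀)) t ∧
      DifferentiableWithinAt ℝ f (Set.Ico 0 (1 / K₀)) t) ∧
    lam 0 = 1 ∧ f 0 = 1 ∧
    (∀ t ∈ Set.Ico (0:ℝ) (1 / K₀),
      HasDerivWithinAt lam (-2 * K₀ + F₀ * (f t)^2 * (lam t)⁻¹) (Set.Ico 0 (1 / K₀)) t ∧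
      HasDerivWithinAt f (-(1/2) * F₀ * (f t)^3 * ((lam t)^2)⁻¹) (Set.Ico 0 (1 / K₀)) t) ∧
    Filter.Tendsto lam (nhdsWithin (1 / K₀) (Set.Iio (1 / K₀))) (nhds 0) := by
  subst hF₀ hlam hf
  have hpos (t : ℝ) (ht : t ∈ Set.Ico (0:ℝ) (1 / F₀)) : 0 < 1 - F₀ * t :=
    one_sub_mul_pos_of_lt_one_div hK₀ ht.2
  have hderiv_sqrt (t : ℝ) (ht : t ∈ Set.Ico (0:ℝ) (1 / F₀)) :
      HasDerivAt (fun t => Real.sqrt (1 - F₀ * t)) (-F₀ / (2 * Real.sqrt (1 - F₀ * t))) t :=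
    (hasDerivAt_one_sub_mul F₀ t).sqrt (hpos t ht).ne'
  refine ⟨fun t ht => ⟨hpos t ht, Real.sqrt_pos.mpr (hpos t ht)⟩,
    fun t ht => ⟨(hasDerivAt_one_sub_mul F₀ t).differentiableAt.differentiableWithinAt,
      (hderiv_sqrt t ht).differentiableAt.differentiableWithinAt⟩,
    by simp, by simp, fun t ht => ?_,
    (tendsto_one_sub_mul_one_div hK₀.ne').mono_left nhdsWithin_le_nhds⟩
  have hsq : Real.sqrt (1 - F₀ * t) ^ 2 = 1 - F₀ * t := Real.sq_sqrt (hpos t ht).le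
  rw [lambda_rhs_eq_of_sq_eq (hpos t ht).ne' hsq,
    fiber_rhs_eq_of_sq_eq (Real.sqrt_pos.mpr (hpos t ht)).ne' hsq]
  exact ⟨(hasDerivAt_one_sub_mul F₀ t).hasDerivWithinAt, (hderiv_sqrt t ht).hasDerivWithinAt⟩
end

section
/- Let K₀ ≠ 0 and F₀ ≥ 0 with a₀ := (F₀/K₀)^{1/3} > 0. Suppose λ is differentiable and positive on an interval I ⊆ [0,∞) containing 0, satisfies λ'(t) = -(2/3)·K₀·(1 - a₀³·λ(t)⁻³) for all t ∈ I, and λ(t) ≠ a₀ for all t ∈ I. Then, with G(x) := a₀·log(|x - a₀|^{1/3} / (x² + a₀·x + a₀²)^{1/6}) - (a₀/√3)·arctan((2·x + a₀)/(√3·a₀)) + x, one has G(λ(t)) = -(2/3)·K₀·t + G(λ(0)) for all t ∈ I. -/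
/-!
Since `G' x = x³ / (x³ - a₀³)` and `λ' = -(2/3) K₀ (λ³ - a₀³) / λ³`, the chain rule gives
`(G ∘ λ)' = -(2/3) K₀` on `I`; as `I` is an interval, the mean value theorem makes
`G (λ t) + (2/3) K₀ t` constant there.
-/

/-- The antiderivative `G` used for the implicit solution of the reduced normalized ODE. -/
noncomputable def G (a₀ : ℝ) : ℝ → ℝ := fun x =>
  a₀ * Real.log (|x - a₀| ^ ((1:ℝ)/3) / (x^2 + a₀ * x + a₀^2) ^ ((1:ℝ)/6))
    - (a₀ / Real.sqrt 3) * Real.arctan ((2 * x + a₀) / (Real.sqrt 3 * a₀)) + x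

open Real

lemma sq_add_mul_add_sq_pos {a : ℝ} (ha : a ≠ 0) (x : ℝ) : 0 < x ^ 2 + a * x + a ^ 2 := by
  nlinarith [sq_nonneg (2 * x + a), sq_pos_of_ne_zero ha]

lemma pow_three_sub_pow_three_ne_zero {a x : ℝ} (ha : a ≠ 0) (hx : x ≠ a) : x ^ 3 - a ^ 3 ≠ 0 := by
  rw [show x ^ 3 - a ^ 3 = (x - a) * (x ^ 2 + a * x + a ^ 2) by ring]
  exact mul_ne_zero (sub_ne_zero.mpr hx) (sq_add_mul_add_sq_pos ha x).ne'

lemma G_eq_of_ne {a x : ℝ} (ha : a ≠ 0) (hx : x ≠ a) :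
    G a x = a * (log (x - a) / 3 - log (x ^ 2 + a * x + a ^ 2) / 6)
      - a / √3 * arctan ((2 * x + a) / (√3 * a)) + x := by
  have habs : 0 < |x - a| := abs_pos.mpr (sub_ne_zero.mpr hx)
  have hQ := sq_add_mul_add_sq_pos ha x
  rw [G, log_div (rpow_pos_of_pos habs _).ne' (rpow_pos_of_pos hQ _).ne', log_rpow habs,
    log_rpow hQ, log_abs]
  ring

lemma hasDerivAt_G {a x : ℝ} (ha : a ≠ 0) (hx : x ≠ a) :
    HasDerivAt (G a) (x ^ 3 / (x ^ 3 - a ^ 3)) x := by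
  have hQ := sq_add_mul_add_sq_pos ha x
  have h3 : √3 ^ 2 = 3 := sq_sqrt (by norm_num)
  have hlog₁ := ((hasDerivAt_id x).sub_const a).log (sub_ne_zero.mpr hx)
  have hlog₂ := (((hasDerivAt_pow 2 x).add ((hasDerivAt_id x).const_mul a)).add_const
    (a ^ 2)).log hQ.ne'
  have harctan := (((hasDerivAt_id x).const_mul 2).add_const a).div_const (√3 * a) |>.arctan
  have hexpr := (((hlog₁.div_const 3).sub (hlog₂.div_const 6)).const_mul a).sub
    (harctan.const_mul (a / √3)) |>.add (hasDerivAt_id x)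
  refine (hexpr.congr_of_eventuallyEq ?_).congr_deriv ?_
  · filter_upwards [isOpen_ne.mem_nhds hx] with y hy
    exact G_eq_of_ne ha hy
  · have hden := pow_three_sub_pow_three_ne_zero ha hx
    have hxa : x - a ≠ 0 := sub_ne_zero.mpr hx
    -- partial fractions: `a³ / (x³ - a³) = a / (3 (x - a)) - a (x + 2a) / (3 (x² + a x + a²))`
    simp only [id, Pi.add_apply]
    rw [div_pow, mul_pow, h3]
    have hQ' : x * (x + a) + a ^ 2 ≠ 0 := by linarith
    field_simp
    rw [h3]
    ring

lemma pow_three_div_pow_three_sub_mul {a x : ℝ} (ha : a ≠ 0) (hx₀ : x ≠ 0) (hx : x ≠ a) (K : ℝ) :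
    x ^ 3 / (x ^ 3 - a ^ 3) * (-(2 / 3) * K * (1 - a ^ 3 * (x ^ 3)⁻¹)) = -(2 / 3) * K := by
  have hden := pow_three_sub_pow_three_ne_zero ha hx
  field_simp

theorem Convex.eq_of_forall_hasDerivWithinAt_zero {E : Type*} [NormedAddCommGroup E]
    [NormedSpace ℝ E] {s : Set ℝ} (hs : Convex ℝ s) {f : ℝ → E}
    (hf : ∀ x ∈ s, HasDerivWithinAt f 0 s x) {x y : ℝ} (hx : x ∈ s) (hy : y ∈ s) :
    f x = f y := by
  have h := hs.norm_image_sub_le_of_norm_hasDerivWithin_le hf (fun _ _ => norm_zero.le) hx hy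
  rw [zero_mul, norm_le_zero_iff, sub_eq_zero] at h
  exact h.symm

theorem stmt_4_general (K₀ : ℝ) (a₀ : ℝ)
    (ha₀pos : 0 < a₀)
    (I : Set ℝ) (h0I : (0:ℝ) ∈ I) (hIconn : I.OrdConnected)
    (lam : ℝ → ℝ) (hpos : ∀ t ∈ I, 0 < lam t)
    (hode : ∀ t ∈ I,
      HasDerivWithinAt lam (-(2/3) * K₀ * (1 - a₀^3 * ((lam t)^3)⁻¹)) I t)
    (hne : ∀ t ∈ I, lam t ≠ a₀) :
    ∀ t ∈ I, G a₀ (lam t) = -(2/3) * K₀ * t + G a₀ (lam 0) := by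
  intro t ht
  have hderiv : ∀ s ∈ I, HasDerivWithinAt (fun s => G a₀ (lam s) + 2 / 3 * K₀ * s) 0 I s := by
    intro s hs
    have hG := (hasDerivAt_G ha₀pos.ne' (hne s hs)).comp_hasDerivWithinAt s (hode s hs)
    rw [pow_three_div_pow_three_sub_mul ha₀pos.ne' (hpos s hs).ne' (hne s hs)] at hG
    exact (hG.add ((hasDerivWithinAt_id s I).const_mul (2 / 3 * K₀))).congr_deriv (by ring)
  have hconst := hIconn.convex.eq_of_forall_hasDerivWithinAt_zero hderiv ht h0I
  simp only [mul_zero, add_zero] at hconst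
  linarith

/-- Along any positive solution `λ` of the reduced normalized ODE
`λ'(t) = -(2/3)K₀(1 - a₀³ λ(t)⁻³)` on an interval `I ⊆ [0,∞)` containing `0`, with
`λ(t) ≠ a₀` throughout, one has `G(λ(t)) = -(2/3)K₀ t + G(λ(0))`. -/
theorem stmt_4 (K₀ F₀ : ℝ) (hK₀ : K₀ ≠ 0) (hF₀ : 0 ≤ F₀) (a₀ : ℝ)
    (ha₀ : a₀ = (F₀ / K₀) ^ ((1:ℝ)/3)) (ha₀pos : 0 < a₀)
    (I : Set ℝ) (hI : I ⊆ Set.Ici 0) (h0I : (0:ℝ) ∈ I) (hIconn : I.OrdConnected)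
    (lam : ℝ → ℝ) (hpos : ∀ t ∈ I, 0 < lam t)
    (hode : ∀ t ∈ I,
      HasDerivWithinAt lam (-(2/3) * K₀ * (1 - a₀^3 * ((lam t)^3)⁻¹)) I t)
    (hne : ∀ t ∈ I, lam t ≠ a₀) :
    ∀ t ∈ I, G a₀ (lam t) = -(2/3) * K₀ * t + G a₀ (lam 0) :=
  stmt_4_general K₀ a₀ ha₀pos I h0I hIconn lam hpos hode hne
end

section
/- Let K₀ > 0 and F₀ > 0, and set a₀ := (F₀/K₀)^{1/3}. Suppose λ : [0,∞) → ℝ is differentiable, positive, satisfies λ(0) = 1 and λ'(t) = -(2/3)·K₀ + (2/3)·F₀·λ(t)⁻³ for all t ≥ 0. Then λ(t) → a₀ and λ(t)⁻¹ → a₀⁻¹ as t → ∞. -/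
/-!
Writing `F₀ = K₀ a₀³`, the equation reads `λ' = (2/3) K₀ (a₀³ - λ³) / λ³`, so
`((λ - a₀)²)' = -(4/3) K₀ (λ - a₀)² (λ² + λ a₀ + a₀²) / λ³ ≤ -(4/3) K₀ (λ - a₀)² / λ`.
Hence `(λ - a₀)²` is nonincreasing, which traps `λ` below `M = a₀ + |1 - a₀|`; feeding
this back, `(λ - a₀)²` decays at least like `exp (-(4/3) K₀ t / M)`.
-/

open Set Filter Topology Real

theorem antitoneOn_exp_mul_of_hasDerivWithinAt {D : Set ℝ} (hD : Convex ℝ D)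
    {g g' : ℝ → ℝ} {c : ℝ} (hg : ∀ t ∈ D, HasDerivWithinAt g (g' t) D t)
    (hg' : ∀ t ∈ D, g' t ≤ -c * g t) :
    AntitoneOn (fun t => exp (c * t) * g t) D := by
  have hderiv (t : ℝ) (ht : t ∈ D) : HasDerivWithinAt (fun t => exp (c * t) * g t)
      (exp (c * t) * (c * g t + g' t)) D t := by
    refine (((hasDerivAt_id' t).const_mul c).exp.hasDerivWithinAt.fun_mul (hg t ht)).congr_deriv
      (by ring)
  refine antitoneOn_of_hasDerivWithinAt_nonpos hD
    (fun t ht => (hderiv t ht).continuousWithinAt)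
    (fun t ht => (hderiv t (interior_subset ht)).mono interior_subset) fun t ht => ?_
  have := hg' t (interior_subset ht)
  exact mul_nonpos_of_nonneg_of_nonpos (exp_pos _).le (by linarith)

theorem tendsto_of_sq_sub_le_mul_exp {f : ℝ → ℝ} {a C c : ℝ} (hc : 0 < c)
    (hf : ∀ᶠ t in atTop, (f t - a) ^ 2 ≤ C * exp (-(c * t))) :
    Tendsto f atTop (𝓝 a) := by
  have hexp : Tendsto (fun t => C * exp (-(c * t))) atTop (𝓝 0) := by
    simpa using (tendsto_exp_neg_atTop_nhds_zero.comp (tendsto_id.const_mul_atTop hc)).const_mul C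
  have hsq : Tendsto (fun t => (f t - a) ^ 2) atTop (𝓝 0) :=
    squeeze_zero' (Eventually.of_forall fun _ => sq_nonneg _) hf hexp
  rw [tendsto_iff_norm_sub_tendsto_zero]
  simpa [sqrt_sq_eq_abs] using hsq.sqrt

/-- The right-hand side of the reduced ODE, with `F₀ = K a³`. -/
noncomputable def reducedField (K a x : ℝ) : ℝ :=
  -(2 / 3) * K + 2 / 3 * (K * a ^ 3) * (x ^ 3)⁻¹

theorem two_mul_sub_mul_reducedField_le {K a c x : ℝ} (hK : 0 ≤ K) (ha : 0 ≤ a) (hx : 0 < x)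
    (hc : c * x ≤ 4 / 3 * K) : 2 * (x - a) * reducedField K a x ≤ -c * (x - a) ^ 2 := by
  have key : 2 * (x - a) * reducedField K a x
      = -(4 / 3 * K) * (x - a) ^ 2 * (x ^ 2 + x * a + a ^ 2) / x ^ 3 := by
    unfold reducedField; field_simp; ring
  rw [key, div_le_iff₀ (by positivity)]
  have : c * x ^ 3 ≤ 4 / 3 * K * (x ^ 2 + x * a + a ^ 2) := by
    nlinarith [mul_le_mul_of_nonneg_right hc (sq_nonneg x), mul_nonneg hx.le ha, sq_nonneg a]
  nlinarith [mul_le_mul_of_nonneg_left this (sq_nonneg (x - a))]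

theorem sq_sub_le_mul_exp {K a c : ℝ} {lam : ℝ → ℝ} (hK : 0 ≤ K) (ha : 0 ≤ a)
    (hpos : ∀ t ∈ Ici (0 : ℝ), 0 < lam t)
    (hode : ∀ t ∈ Ici (0 : ℝ), HasDerivWithinAt lam (reducedField K a (lam t)) (Ici 0) t)
    (hc : ∀ t ∈ Ici (0 : ℝ), c * lam t ≤ 4 / 3 * K) {t : ℝ} (ht : 0 ≤ t) :
    (lam t - a) ^ 2 ≤ (lam 0 - a) ^ 2 * exp (-(c * t)) := by
  have hanti := antitoneOn_exp_mul_of_hasDerivWithinAt (convex_Ici 0)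
    (fun s hs => ((hode s hs).sub_const a).fun_pow 2)
    (fun s hs => by simpa using two_mul_sub_mul_reducedField_le hK ha (hpos s hs) (hc s hs))
  have := hanti self_mem_Ici (mem_Ici.2 ht) ht
  simp only [mul_zero, exp_zero, one_mul] at this
  rwa [exp_neg, ← div_eq_mul_inv, le_div_iff₀' (exp_pos _)]

/-- For `K₀ > 0`, `F₀ > 0` and `a₀ = (F₀/K₀)^{1/3}`, any positive
solution of the reduced normalized ODE on `[0,∞)` with `λ(0) = 1` satisfies
`λ(t) → a₀` and `λ(t)⁻¹ → a₀⁻¹` as `t → ∞`. -/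
theorem stmt_5 (K₀ F₀ : ℝ) (hK₀ : 0 < K₀) (hF₀ : 0 < F₀) (a₀ : ℝ)
    (ha₀ : a₀ = (F₀ / K₀) ^ ((1:ℝ)/3))
    (lam : ℝ → ℝ) (hpos : ∀ t ∈ Set.Ici (0:ℝ), 0 < lam t) (hl0 : lam 0 = 1)
    (hode : ∀ t ∈ Set.Ici (0:ℝ),
      HasDerivWithinAt lam (-(2/3) * K₀ + (2/3) * F₀ * ((lam t)^3)⁻¹) (Set.Ici 0) t) :
    Filter.Tendsto lam Filter.atTop (nhds a₀) ∧
    Filter.Tendsto (fun t => (lam t)⁻¹) Filter.atTop (nhds a₀⁻¹) := by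
  have ha : 0 < a₀ := ha₀ ▸ rpow_pos_of_pos (div_pos hF₀ hK₀) _
  have hF : F₀ = K₀ * a₀ ^ 3 := by
    rw [ha₀, ← rpow_natCast, ← rpow_mul (div_pos hF₀ hK₀).le]
    norm_num [mul_div_cancel₀, hK₀.ne']
  rw [hF] at hode
  set M := a₀ + |1 - a₀|
  have hbound (t : ℝ) (ht : t ∈ Ici (0 : ℝ)) : lam t ≤ M := by
    have := sq_sub_le_mul_exp (c := 0) hK₀.le ha.le hpos hode (by simp [hK₀.le]) ht
    rw [hl0, zero_mul, neg_zero, exp_zero, mul_one, sq_le_sq] at this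
    linarith [le_abs_self (lam t - a₀)]
  have hM : 0 < M := by positivity
  have hlim : Tendsto lam atTop (𝓝 a₀) := by
    refine tendsto_of_sq_sub_le_mul_exp (C := (1 - a₀) ^ 2) (c := 4 / 3 * K₀ / M)
      (by positivity) (eventually_ge_atTop 0 |>.mono fun t ht => ?_)
    rw [← hl0]
    refine sq_sub_le_mul_exp hK₀.le ha.le hpos hode (fun s hs => ?_) ht
    rw [div_mul_eq_mul_div, div_le_iff₀ hM]
    exact mul_le_mul_of_nonneg_left (hbound s hs) (by positivity)
  exact ⟨hlim, hlim.inv₀ ha.ne'⟩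
end

section
/- Let K₀ > 0 and F₀ > 0, and set a₀ := (F₀/K₀)^{1/3}. Suppose λ : [0,∞) → ℝ is differentiable, positive, satisfies λ(0) = 1 and λ'(t) = -(2/3)·K₀ + (2/3)·F₀·λ(t)⁻³ for all t ≥ 0. Then the scalar curvature R(t) := 2·K₀·λ(t)⁻¹ - (1/2)·F₀·λ(t)⁻⁴ converges to (3/2)·K₀·a₀⁻¹ as t → ∞. -/
/-!
Write `F₀ = K₀ a₀³`, so that `λ' = (2/3) K₀ (a₀ - λ)(λ² + λ a₀ + a₀²) / λ³`. Then
`D = (λ - a₀)²` satisfies `D' = -(4/3) K₀ ((λ² + λ a₀ + a₀²) / λ³) D ≤ 0`, so `D` is nonincreasing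
and `λ` stays below `M = a₀ + |λ(0) - a₀|`. On `(0, M]` the coefficient is at least
`(4/3) K₀ a₀² / M³ > 0`, so Grönwall gives exponential decay of `D`, i.e. `λ → a₀`, and by
continuity `R → 2 K₀ a₀⁻¹ - (1/2) K₀ a₀³ a₀⁻⁴ = (3/2) K₀ a₀⁻¹`.
-/

open Set Filter Real Topology

lemma antitoneOn_Ici_of_hasDerivWithinAt_nonpos {f f' : ℝ → ℝ} {a : ℝ}
    (hf : ∀ t ∈ Ici a, HasDerivWithinAt f (f' t) (Ici a) t) (hf' : ∀ t ∈ Ici a, f' t ≤ 0) :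
    AntitoneOn f (Ici a) := by
  refine antitoneOn_of_hasDerivWithinAt_nonpos (f' := f') (convex_Ici a)
    (fun t ht => (hf t ht).continuousWithinAt) (fun t ht => ?_) (fun t ht => ?_)
  all_goals rw [interior_Ici] at *
  · exact (hf t (mem_Ici_of_Ioi ht)).mono Ioi_subset_Ici_self
  · exact hf' t (mem_Ici_of_Ioi ht)

lemma le_mul_exp_of_hasDerivWithinAt_le_neg_mul {f f' : ℝ → ℝ} {a k : ℝ}
    (hf : ∀ t ∈ Ici a, HasDerivWithinAt f (f' t) (Ici a) t) (hf' : ∀ t ∈ Ici a, f' t ≤ -k * f t) :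
    ∀ t ∈ Ici a, f t ≤ f a * exp (-k * (t - a)) := by
  intro t ht
  have := le_gronwallBound_of_liminf_deriv_right_le (b := t) (K := -k) (ε := 0)
    (fun x hx => ((hf x hx.1).continuousWithinAt).mono Icc_subset_Ici_self)
    (fun x (hx : x ∈ Ico a t) r hr => by
      simpa only [slope_def_module, smul_eq_mul] using
        ((hf x hx.1).mono (Ici_subset_Ici.2 hx.1)).liminf_right_slope_le hr)
    le_rfl (fun x hx => by simpa using hf' x hx.1) t ⟨ht, le_rfl⟩
  rwa [gronwallBound_ε0] at this

section ReducedFlow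

variable {K a : ℝ} {lam : ℝ → ℝ}

lemma hasDerivWithinAt_sq_sub_equilibrium (hpos : ∀ t ∈ Ici (0:ℝ), 0 < lam t)
    (hode : ∀ t ∈ Ici (0:ℝ), HasDerivWithinAt lam
      (-(2/3) * K + (2/3) * (K * a ^ 3) * ((lam t) ^ 3)⁻¹) (Ici 0) t) :
    ∀ t ∈ Ici (0:ℝ), HasDerivWithinAt (fun s => (lam s - a) ^ 2)
      (-(4/3) * K * ((lam t ^ 2 + lam t * a + a ^ 2) / lam t ^ 3) * (lam t - a) ^ 2) (Ici 0) t := by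
  intro t ht
  refine (((hode t ht).sub_const a).pow 2).congr_deriv ?_
  have := (hpos t ht).ne'
  field_simp
  ring

lemma sq_sub_equilibrium_antitoneOn (hK : 0 ≤ K) (hpos : ∀ t ∈ Ici (0:ℝ), 0 < lam t)
    (hode : ∀ t ∈ Ici (0:ℝ), HasDerivWithinAt lam
      (-(2/3) * K + (2/3) * (K * a ^ 3) * ((lam t) ^ 3)⁻¹) (Ici 0) t) :
    AntitoneOn (fun s => (lam s - a) ^ 2) (Ici 0) := by
  refine antitoneOn_Ici_of_hasDerivWithinAt_nonpos
    (hasDerivWithinAt_sq_sub_equilibrium hpos hode) fun t ht => ?_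
  have hquad : 0 ≤ lam t ^ 2 + lam t * a + a ^ 2 := by nlinarith [sq_nonneg (lam t + a / 2)]
  have hx := hpos t ht
  have : 0 ≤ K * ((lam t ^ 2 + lam t * a + a ^ 2) / lam t ^ 3) * (lam t - a) ^ 2 := by positivity
  linarith

lemma le_equilibrium_add_abs (hK : 0 ≤ K) (hpos : ∀ t ∈ Ici (0:ℝ), 0 < lam t)
    (hode : ∀ t ∈ Ici (0:ℝ), HasDerivWithinAt lam
      (-(2/3) * K + (2/3) * (K * a ^ 3) * ((lam t) ^ 3)⁻¹) (Ici 0) t) {t : ℝ} (ht : 0 ≤ t) :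
    lam t ≤ a + |lam 0 - a| := by
  have hdist := sq_le_sq.1 (sq_sub_equilibrium_antitoneOn hK hpos hode self_mem_Ici ht ht)
  linarith [le_abs_self (lam t - a)]

lemma tendsto_equilibrium (hK : 0 < K) (ha : 0 < a) (hpos : ∀ t ∈ Ici (0:ℝ), 0 < lam t)
    (hode : ∀ t ∈ Ici (0:ℝ), HasDerivWithinAt lam
      (-(2/3) * K + (2/3) * (K * a ^ 3) * ((lam t) ^ 3)⁻¹) (Ici 0) t) :
    Tendsto lam atTop (𝓝 a) := by
  set M := a + |lam 0 - a|
  have hM : 0 < M := by positivity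
  have hdecay : ∀ t ∈ Ici (0:ℝ),
      -(4/3) * K * ((lam t ^ 2 + lam t * a + a ^ 2) / lam t ^ 3) * (lam t - a) ^ 2
        ≤ -(4/3 * K * (a ^ 2 / M ^ 3)) * (lam t - a) ^ 2 := by
    intro t ht
    have hx := hpos t ht
    have hxM := le_equilibrium_add_abs hK.le hpos hode ht
    have hcoeff : a ^ 2 / M ^ 3 ≤ (lam t ^ 2 + lam t * a + a ^ 2) / lam t ^ 3 :=
      calc a ^ 2 / M ^ 3 ≤ a ^ 2 / lam t ^ 3 := by gcongr
        _ ≤ _ := by gcongr; nlinarith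
    nlinarith [mul_le_mul_of_nonneg_right hcoeff (sq_nonneg (lam t - a))]
  have hsq : Tendsto (fun t => (lam t - a) ^ 2) atTop (𝓝 0) := by
    have hexp := le_mul_exp_of_hasDerivWithinAt_le_neg_mul
      (hasDerivWithinAt_sq_sub_equilibrium hpos hode) hdecay
    refine tendsto_of_tendsto_of_tendsto_of_le_of_le' tendsto_const_nhds ?_
      (Eventually.of_forall fun t => sq_nonneg _)
      ((eventually_ge_atTop 0).mono fun t ht => hexp t ht)
    have hk : -(4/3 * K * (a ^ 2 / M ^ 3)) < 0 := by simp only [neg_lt_zero]; positivity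
    simpa using tendsto_const_nhds.mul
      (tendsto_exp_atBot.comp (tendsto_id.const_mul_atTop_of_neg hk))
  rw [tendsto_iff_norm_sub_tendsto_zero]
  simpa only [sqrt_sq_eq_abs, sqrt_zero, norm_eq_abs] using hsq.sqrt

end ReducedFlow

theorem stmt_6_general (K₀ F₀ : ℝ) (hK₀ : 0 < K₀) (hF₀ : 0 < F₀) (a₀ : ℝ)
    (ha₀ : a₀ = (F₀ / K₀) ^ ((1:ℝ)/3))
    (lam : ℝ → ℝ) (hpos : ∀ t ∈ Set.Ici (0:ℝ), 0 < lam t)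
    (hode : ∀ t ∈ Set.Ici (0:ℝ),
      HasDerivWithinAt lam (-(2/3) * K₀ + (2/3) * F₀ * ((lam t)^3)⁻¹) (Set.Ici 0) t) :
    Filter.Tendsto (fun t => 2 * K₀ * (lam t)⁻¹ - (1/2) * F₀ * ((lam t)^4)⁻¹)
      Filter.atTop (nhds ((3/2) * K₀ * a₀⁻¹)) := by
  have hFK : 0 < F₀ / K₀ := div_pos hF₀ hK₀
  have ha : 0 < a₀ := ha₀ ▸ rpow_pos_of_pos hFK _
  have hF : F₀ = K₀ * a₀ ^ 3 := by
    rw [ha₀, one_div, ← rpow_natCast, ← rpow_mul hFK.le]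
    norm_num
    field_simp
  subst hF
  have hlim := tendsto_equilibrium hK₀ ha hpos hode
  have hR := (tendsto_const_nhds (x := 2 * K₀)).mul (hlim.inv₀ ha.ne') |>.sub
    ((tendsto_const_nhds (x := (1/2) * (K₀ * a₀ ^ 3))).mul ((hlim.pow 4).inv₀ (by positivity)))
  convert hR using 2
  field_simp
  ring

/-- For `K₀ > 0`, `F₀ > 0` and `a₀ = (F₀/K₀)^{1/3}`, along any positive
solution of the reduced normalized ODE on `[0,∞)` with `λ(0) = 1`, the scalar curvature
`R(t) = 2K₀ λ(t)⁻¹ - (1/2)F₀ λ(t)⁻⁴` converges to `(3/2)K₀ a₀⁻¹` as `t → ∞`. -/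
theorem stmt_6 (K₀ F₀ : ℝ) (hK₀ : 0 < K₀) (hF₀ : 0 < F₀) (a₀ : ℝ)
    (ha₀ : a₀ = (F₀ / K₀) ^ ((1:ℝ)/3))
    (lam : ℝ → ℝ) (hpos : ∀ t ∈ Set.Ici (0:ℝ), 0 < lam t) (hl0 : lam 0 = 1)
    (hode : ∀ t ∈ Set.Ici (0:ℝ),
      HasDerivWithinAt lam (-(2/3) * K₀ + (2/3) * F₀ * ((lam t)^3)⁻¹) (Set.Ici 0) t) :
    Filter.Tendsto (fun t => 2 * K₀ * (lam t)⁻¹ - (1/2) * F₀ * ((lam t)^4)⁻¹)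
      Filter.atTop (nhds ((3/2) * K₀ * a₀⁻¹)) :=
  stmt_6_general K₀ F₀ hK₀ hF₀ a₀ ha₀ lam hpos hode
end

section
/- Let K₀ < 0 and F₀ > 0. Suppose λ : [0,∞) → ℝ is differentiable, positive, satisfies λ(0) = 1 and λ'(t) = -(2/3)·K₀ + (2/3)·F₀·λ(t)⁻³ for all t ≥ 0. Then λ(t)⁴ ≥ 1 + (8/3)·F₀·t for all t ≥ 0; consequently λ(t) → ∞ and λ(t)⁻¹ → 0 as t → ∞. -/
/-!
For a positive solution of `λ' = a + b λ⁻³`, the `b`-term drops out of the derivative of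
`λ⁴ - 4bt`, which equals `4aλ³`. When `a ≥ 0` this quantity is therefore nondecreasing, so
`λ(t)⁴ ≥ λ(0)⁴ + 4bt`; with `a = -(2/3)K₀ ≥ 0` and `b = (2/3)F₀ > 0` this is the linear lower
bound on `λ⁴`, which forces `λ → ∞` and hence `λ⁻¹ → 0`.
-/

open Filter Set

theorem tendsto_atTop_of_pow_tendsto_atTop {α : Type*} {l : Filter α} {f : α → ℝ} {n : ℕ}
    (hn : n ≠ 0) (hf : ∀ᶠ x in l, 0 ≤ f x) (h : Tendsto (fun x => f x ^ n) l atTop) :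
    Tendsto f l atTop :=
  ((tendsto_rpow_atTop (by positivity : (0 : ℝ) < (n : ℝ)⁻¹)).comp h).congr'
    (hf.mono fun _ hx => Real.pow_rpow_inv_natCast hx hn)

section ReducedODE

variable {a b : ℝ} {lam : ℝ → ℝ}

theorem hasDerivWithinAt_pow_four_sub_mul {s : Set ℝ} {t : ℝ} (ht : lam t ≠ 0)
    (h : HasDerivWithinAt lam (a + b * (lam t ^ 3)⁻¹) s t) :
    HasDerivWithinAt (fun u => lam u ^ 4 - 4 * b * u) (4 * a * lam t ^ 3) s t := by
  refine ((h.pow 4).sub ((hasDerivWithinAt_id t s).const_mul (4 * b))).congr_deriv ?_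
  field_simp
  norm_num
  ring

theorem monotoneOn_pow_four_sub_mul (ha : 0 ≤ a) (hpos : ∀ t ∈ Ici (0 : ℝ), 0 < lam t)
    (hode : ∀ t ∈ Ici (0 : ℝ), HasDerivWithinAt lam (a + b * (lam t ^ 3)⁻¹) (Ici 0) t) :
    MonotoneOn (fun u => lam u ^ 4 - 4 * b * u) (Ici 0) := by
  have hderiv t (ht : t ∈ Ici (0 : ℝ)) :=
    hasDerivWithinAt_pow_four_sub_mul (hpos t ht).ne' (hode t ht)
  refine monotoneOn_of_hasDerivWithinAt_nonneg (f' := fun t => 4 * a * lam t ^ 3) (convex_Ici 0)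
    (fun t ht => (hderiv t ht).continuousWithinAt) (fun t ht => ?_) (fun t ht => ?_)
  · rw [interior_Ici] at ht ⊢
    exact (hderiv t (mem_Ici.2 (le_of_lt ht))).mono Ioi_subset_Ici_self
  · rw [interior_Ici] at ht
    have := hpos t (mem_Ici.2 (le_of_lt ht))
    positivity

theorem pow_four_add_mul_le (ha : 0 ≤ a) (hpos : ∀ t ∈ Ici (0 : ℝ), 0 < lam t)
    (hode : ∀ t ∈ Ici (0 : ℝ), HasDerivWithinAt lam (a + b * (lam t ^ 3)⁻¹) (Ici 0) t)
    {t : ℝ} (ht : t ∈ Ici (0 : ℝ)) :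
    lam 0 ^ 4 + 4 * b * t ≤ lam t ^ 4 := by
  have := monotoneOn_pow_four_sub_mul ha hpos hode self_mem_Ici ht ht
  simp only [mul_zero, sub_zero] at this
  linarith

end ReducedODE

/-- For `K₀ < 0` and `F₀ > 0`, any positive solution of the reduced
normalized ODE on `[0,∞)` with `λ(0) = 1` satisfies `λ(t)⁴ ≥ 1 + (8/3)F₀ t`; consequently
`λ(t) → ∞` and `λ(t)⁻¹ → 0` as `t → ∞`. -/
theorem stmt_7 (K₀ F₀ : ℝ) (hK₀ : K₀ < 0) (hF₀ : 0 < F₀)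
    (lam : ℝ → ℝ) (hpos : ∀ t ∈ Set.Ici (0:ℝ), 0 < lam t) (hl0 : lam 0 = 1)
    (hode : ∀ t ∈ Set.Ici (0:ℝ),
      HasDerivWithinAt lam (-(2/3) * K₀ + (2/3) * F₀ * ((lam t)^3)⁻¹) (Set.Ici 0) t) :
    (∀ t ∈ Set.Ici (0:ℝ), 1 + (8/3) * F₀ * t ≤ (lam t)^4) ∧
    Filter.Tendsto lam Filter.atTop Filter.atTop ∧
    Filter.Tendsto (fun t => (lam t)⁻¹) Filter.atTop (nhds 0) := by
  have hbound (t : ℝ) (ht : t ∈ Ici (0 : ℝ)) : 1 + (8/3) * F₀ * t ≤ lam t ^ 4 := by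
    have := pow_four_add_mul_le (by linarith) hpos hode ht
    rw [hl0] at this
    linarith
  have hlinear : Tendsto (fun t : ℝ => 1 + (8/3) * F₀ * t) atTop atTop :=
    tendsto_atTop_add_const_left _ 1 (tendsto_id.const_mul_atTop (by positivity))
  have hlam : Tendsto lam atTop atTop :=
    tendsto_atTop_of_pow_tendsto_atTop four_ne_zero
      ((eventually_ge_atTop 0).mono fun t ht => (hpos t ht).le)
      (tendsto_atTop_mono' _ ((eventually_ge_atTop 0).mono hbound) hlinear)
  exact ⟨hbound, hlam, hlam.inv_tendsto_atTop⟩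
end

section
/- Let K₀ < 0 and F₀ > 0. Suppose λ : [0,∞) → ℝ is differentiable, positive, satisfies λ(0) = 1 and λ'(t) = -(2/3)·K₀ + (2/3)·F₀·λ(t)⁻³ for all t ≥ 0. Then the scalar curvature R(t) := 2·K₀·λ(t)⁻¹ - (1/2)·F₀·λ(t)⁻⁴ converges to 0 as t → ∞. -/
/-!
The ODE forces `λ' ≥ -(2/3)·K₀ > 0` as long as `λ > 0`, so `λ` grows at least linearly and
tends to `∞`; both terms of `R = 2K₀ λ⁻¹ - (1/2)F₀ λ⁻⁴` then vanish in the limit.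
-/

open Filter Set Topology

theorem add_mul_sub_le_of_hasDerivWithinAt_Ici {f f' : ℝ → ℝ} {a c : ℝ}
    (hf : ∀ t ∈ Ici a, HasDerivWithinAt f (f' t) (Ici a) t) (hc : ∀ t ∈ Ioi a, c ≤ f' t)
    {t : ℝ} (ht : a ≤ t) : f a + c * (t - a) ≤ f t := by
  have hderiv : ∀ s ∈ interior (Ici a), HasDerivAt f (f' s) s := fun s hs =>
    (hf s (interior_subset hs)).hasDerivAt (mem_interior_iff_mem_nhds.1 hs)
  have key := (convex_Ici a).mul_sub_le_image_sub_of_le_deriv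
    (fun s hs => (hf s hs).continuousWithinAt)
    (fun s hs => (hderiv s hs).differentiableAt.differentiableWithinAt)
    (fun s hs => (hderiv s hs).deriv ▸ hc s (by rwa [interior_Ici] at hs)) a self_mem_Ici t ht ht
  linarith

theorem tendsto_atTop_of_hasDerivWithinAt_Ici {f f' : ℝ → ℝ} {a c : ℝ} (hc₀ : 0 < c)
    (hf : ∀ t ∈ Ici a, HasDerivWithinAt f (f' t) (Ici a) t) (hc : ∀ t ∈ Ioi a, c ≤ f' t) :
    Tendsto f atTop atTop := by
  have hlinear : Tendsto (fun t => f a + c * (t - a)) atTop atTop :=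
    tendsto_atTop_add_const_left _ _ <|
      (tendsto_atTop_add_const_right _ (-a) tendsto_id).const_mul_atTop hc₀
  refine tendsto_atTop_mono' _ ?_ hlinear
  filter_upwards [eventually_ge_atTop a] with t ht
  exact add_mul_sub_le_of_hasDerivWithinAt_Ici hf hc ht

/-- The argument `x` is `λ`, the inverse of the fiber size. -/
noncomputable def scalarCurvature (K₀ F₀ x : ℝ) : ℝ :=
  2 * K₀ * x⁻¹ - (1/2) * F₀ * (x ^ 4)⁻¹

theorem tendsto_scalarCurvature_atTop (K₀ F₀ : ℝ) :
    Tendsto (scalarCurvature K₀ F₀) atTop (𝓝 0) := by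
  have hinv : Tendsto (fun x : ℝ => x⁻¹) atTop (𝓝 0) := tendsto_inv_atTop_zero
  have hinv4 : Tendsto (fun x : ℝ => (x ^ 4)⁻¹) atTop (𝓝 0) :=
    tendsto_inv_atTop_zero.comp (tendsto_pow_atTop four_ne_zero)
  show Tendsto (fun x => 2 * K₀ * x⁻¹ - (1/2) * F₀ * (x ^ 4)⁻¹) atTop (𝓝 0)
  simpa using (hinv.const_mul (2 * K₀)).sub (hinv4.const_mul ((1/2) * F₀))

theorem stmt_8_general (K₀ F₀ : ℝ) (hK₀ : K₀ < 0) (hF₀ : 0 < F₀)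
    (lam : ℝ → ℝ) (hpos : ∀ t ∈ Set.Ici (0:ℝ), 0 < lam t)
    (hode : ∀ t ∈ Set.Ici (0:ℝ),
      HasDerivWithinAt lam (-(2/3) * K₀ + (2/3) * F₀ * ((lam t)^3)⁻¹) (Set.Ici 0) t) :
    Filter.Tendsto (fun t => 2 * K₀ * (lam t)⁻¹ - (1/2) * F₀ * ((lam t)^4)⁻¹)
      Filter.atTop (nhds 0) := by
  have hgrowth : Tendsto lam atTop atTop := by
    refine tendsto_atTop_of_hasDerivWithinAt_Ici (c := -(2/3) * K₀) (by linarith) hode ?_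
    intro t ht
    have hlam := hpos t (Ioi_subset_Ici_self ht)
    exact le_add_of_nonneg_right (by positivity)
  exact (tendsto_scalarCurvature_atTop K₀ F₀).comp hgrowth

/-- For `K₀ < 0` and `F₀ > 0`, along any positive solution of the reduced
normalized ODE on `[0,∞)` with `λ(0) = 1`, the scalar curvature
`R(t) = 2K₀ λ(t)⁻¹ - (1/2)F₀ λ(t)⁻⁴` converges to `0` as `t → ∞`. -/
theorem stmt_8 (K₀ F₀ : ℝ) (hK₀ : K₀ < 0) (hF₀ : 0 < F₀)
    (lam : ℝ → ℝ) (hpos : ∀ t ∈ Set.Ici (0:ℝ), 0 < lam t) (hl0 : lam 0 = 1)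
    (hode : ∀ t ∈ Set.Ici (0:ℝ),
      HasDerivWithinAt lam (-(2/3) * K₀ + (2/3) * F₀ * ((lam t)^3)⁻¹) (Set.Ici 0) t) :
    Filter.Tendsto (fun t => 2 * K₀ * (lam t)⁻¹ - (1/2) * F₀ * ((lam t)^4)⁻¹)
      Filter.atTop (nhds 0) :=
  stmt_8_general K₀ F₀ hK₀ hF₀ lam hpos hode
end

section
/- Let K₀ = 0 and F₀ > 0. Define λ(t) := (1 + (8/3)·F₀·t)^{1/4} and f(t) := (1 + (8/3)·F₀·t)^{-1/4} for t ≥ 0. Then λ and f are differentiable and positive on [0,∞), λ(0) = f(0) = 1, f(t) = λ(t)⁻¹, and λ'(t) = (2/3)·F₀·λ(t)⁻³ for all t ≥ 0; consequently (λ, f) satisfies the normalized S¹-triple Ricci flow system with parameters (0, F₀): λ'(t) = -(2/3)·K₀ + (2/3)·F₀·f(t)²·λ(t)⁻¹ and f'(t) = (2/3)·K₀·f(t)·λ(t)⁻¹ - (2/3)·F₀·f(t)³·λ(t)⁻². -/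
/-!
With `u(t) = 1 + (8/3) F₀ t` we have `λ = u^{1/4}`, so `λ⁴ = u` and `4 λ³ λ' = u' = (8/3) F₀`, i.e.
`λ' = (2/3) F₀ λ⁻³`. Since `f = λ⁻¹`, the `λ`-equation of the system with `K₀ = 0` reads
`λ' = (2/3) F₀ λ⁻³`, and the `f`-equation `f' = -λ'/λ² = -(2/3) F₀ λ⁻⁵` follows from it.
-/

open Set

theorem hasDerivAt_rpow_inv_natCast {u : ℝ → ℝ} {u' t : ℝ} {n : ℕ} (hn : n ≠ 0)
    (hu : HasDerivAt u u' t) (hpos : 0 < u t) :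
    HasDerivAt (fun s => u s ^ (n⁻¹ : ℝ)) (u' / (n * (u t ^ (n⁻¹ : ℝ)) ^ (n - 1))) t := by
  convert hu.rpow_const (p := (n⁻¹ : ℝ)) (Or.inl hpos.ne') using 1
  rw [Real.rpow_sub_one hpos.ne']
  set r := u t ^ (n⁻¹ : ℝ)
  have hr_pos : 0 < r := Real.rpow_pos_of_pos hpos _
  have hpow : r ^ (n - 1) * r = u t := by
    rw [← pow_succ, Nat.sub_add_cancel (Nat.one_le_iff_ne_zero.2 hn),
      Real.rpow_inv_natCast_pow hpos.le hn]
  rw [← hpow]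
  field_simp

theorem hasDerivWithinAt_inv_of_hasDerivWithinAt_inv_pow_three {lam f : ℝ → ℝ} {s : Set ℝ}
    {c t : ℝ} (hlam : HasDerivWithinAt lam (c * ((lam t) ^ 3)⁻¹) s t)
    (hf : ∀ x ∈ s, f x = (lam x)⁻¹) (ht : t ∈ s) (hpos : lam t ≠ 0) :
    HasDerivWithinAt lam (c * (f t) ^ 2 * (lam t)⁻¹) s t ∧
      HasDerivWithinAt f (-(c * (f t) ^ 3 * ((lam t) ^ 2)⁻¹)) s t := by
  have hderiv_f : HasDerivWithinAt f (-(c * ((lam t) ^ 3)⁻¹) / lam t ^ 2) s t :=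
    (hlam.inv hpos).congr_of_mem hf ht
  rw [hf t ht]
  constructor
  · convert hlam using 1
    field_simp
  · convert hderiv_f using 1
    field_simp

/-- For `K₀ = 0` and `F₀ > 0`, the functions
`λ(t) = (1 + (8/3)F₀ t)^{1/4}` and `f(t) = (1 + (8/3)F₀ t)^{-1/4}` are differentiable and
positive on `[0,∞)`, satisfy `λ(0) = f(0) = 1`, `f = λ⁻¹`, `λ' = (2/3)F₀ λ⁻³`, and solve
the normalized S¹-triple Ricci flow system with parameters `(0, F₀)`. -/
theorem stmt_13 (K₀ F₀ : ℝ) (hK₀ : K₀ = 0) (hF₀ : 0 < F₀)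
    (lam f : ℝ → ℝ)
    (hlam : lam = fun t => (1 + (8/3) * F₀ * t) ^ ((1:ℝ)/4))
    (hf : f = fun t => (1 + (8/3) * F₀ * t) ^ (-(1:ℝ)/4)) :
    (∀ t ∈ Set.Ici (0:ℝ), 0 < lam t ∧ 0 < f t) ∧
    (∀ t ∈ Set.Ici (0:ℝ),
      DifferentiableWithinAt ℝ lam (Set.Ici 0) t ∧
      DifferentiableWithinAt ℝ f (Set.Ici 0) t) ∧
    lam 0 = 1 ∧ f 0 = 1 ∧
    (∀ t ∈ Set.Ici (0:ℝ), f t = (lam t)⁻¹) ∧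
    (∀ t ∈ Set.Ici (0:ℝ),
      HasDerivWithinAt lam ((2/3) * F₀ * ((lam t)^3)⁻¹) (Set.Ici 0) t) ∧
    (∀ t ∈ Set.Ici (0:ℝ),
      HasDerivWithinAt lam (-(2/3) * K₀ + (2/3) * F₀ * (f t)^2 * (lam t)⁻¹) (Set.Ici 0) t) ∧
    (∀ t ∈ Set.Ici (0:ℝ),
      HasDerivWithinAt f
        ((2/3) * K₀ * f t * (lam t)⁻¹ - (2/3) * F₀ * (f t)^3 * ((lam t)^2)⁻¹)
        (Set.Ici 0) t) := by
  subst hK₀ hlam hf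
  have hbase_pos : ∀ t ∈ Ici (0:ℝ), 0 < 1 + (8/3) * F₀ * t := fun t (ht : 0 ≤ t) => by positivity
  have hf_inv : ∀ t ∈ Ici (0:ℝ),
      (1 + (8/3) * F₀ * t) ^ (-(1:ℝ)/4) = ((1 + (8/3) * F₀ * t) ^ ((1:ℝ)/4))⁻¹ := fun t ht => by
    rw [neg_div, Real.rpow_neg (hbase_pos t ht).le]
  have hlam_deriv : ∀ t ∈ Ici (0:ℝ), HasDerivAt (fun t => (1 + (8/3) * F₀ * t) ^ ((1:ℝ)/4))
      ((2/3) * F₀ * (((1 + (8/3) * F₀ * t) ^ ((1:ℝ)/4)) ^ 3)⁻¹) t := fun t ht => by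
    have hbase : HasDerivAt (fun t => 1 + (8/3) * F₀ * t) ((8/3) * F₀) t := by
      simpa using ((hasDerivAt_id t).const_mul ((8/3) * F₀)).const_add 1
    convert hasDerivAt_rpow_inv_natCast (n := 4) (by norm_num) hbase (hbase_pos t ht) using 1
    · norm_num
    · norm_num
      ring
  have hlam_pos : ∀ t ∈ Ici (0:ℝ), 0 < (1 + (8/3) * F₀ * t) ^ ((1:ℝ)/4) := fun t ht =>
    Real.rpow_pos_of_pos (hbase_pos t ht) _
  have hsystem := fun t ht => hasDerivWithinAt_inv_of_hasDerivWithinAt_inv_pow_three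
    (hlam_deriv t ht).hasDerivWithinAt hf_inv ht (hlam_pos t ht).ne'
  refine ⟨fun t ht => ⟨hlam_pos t ht, Real.rpow_pos_of_pos (hbase_pos t ht) _⟩,
    fun t ht => ⟨(hsystem t ht).1.differentiableWithinAt, (hsystem t ht).2.differentiableWithinAt⟩,
    by norm_num, by norm_num, hf_inv, fun t ht => (hlam_deriv t ht).hasDerivWithinAt,
    fun t ht => ?_, fun t ht => ?_⟩
  · simpa only [mul_zero, neg_zero, zero_add] using (hsystem t ht).1
  · simpa only [mul_zero, zero_mul, zero_sub] using (hsystem t ht).2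
end
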